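/- Let F* be a fixed graph with two distinguished non-adjacent vertices a_1, a_2, and let W ⊆ [n]. In the binomial random graph G(n,p) with (log n)/n ≤ p < 1, with probability at least 1 - exp(-(n log n)/(2 e(F*))) there exists a set E_0 of at most n·log n edges of G(n,p) such that the graph obtained by deleting E_0 contains at most 2 p^{e(F*)} n^{v(F*)-2} |W|² copies φ(F*) of F* satisfying V(φ(F*)) ∩ W = {φ(a_1), φ(a_2)}. -/

import Mathlib

open scoped Classical

/-- The edge set of the complete graph on `[n] = Fin n`. -/
noncomputable def edgeUniv (n : ℕ) : Finset (Sym2 (Fin n)) :=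
  Finset.univ.filter (fun e => ¬ e.IsDiag)

/-- The probability, in the binomial random graph `G(n,p)` (modelled as a random subset `G` of
the edges of `Kₙ`, each edge present independently with probability `p`), of an event `A`. -/
noncomputable def gnpProb (n : ℕ) (p : ℝ) (A : Finset (Sym2 (Fin n)) → Prop) : ℝ :=
  ∑ G ∈ (edgeUniv n).powerset,
    if A G then p ^ G.card * (1 - p) ^ ((edgeUniv n).card - G.card) else 0

/-!
The deletion method of Rödl and Ruciński. Call `G` robust if deleting any at most `k` of its edges
leaves more than `2μ` copies, where `μ ≥ p^s · #candidates` bounds the expected number of copies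
(`s = e(F)`). A robust `G` contains at least `(2μ)^r` ordered `r`-tuples of pairwise edge-disjoint
copies, `r = ⌊k/s⌋ + 1`: a tuple of `m ≤ ⌊k/s⌋` disjoint copies covers only `ms ≤ k` edges, and
each of the more than `2μ` copies surviving their deletion extends it. A fixed disjoint `r`-tuple
lies in `G(n,p)` with probability `p^{rs}`, so there are at most `μ^r` such tuples in expectation,
and Markov's inequality bounds the probability of robustness by `2^{-r} ≤ exp(-k/(2s))`. The
candidates, injections meeting `W` exactly in the images of `a₁, a₂`, number at most
`n^{v-2} |W|²`.
-/

open Finset Function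

theorem half_pow_floor_add_one_le_exp (x : ℝ) :
    (1 / 2 : ℝ) ^ (⌊x⌋₊ + 1) ≤ Real.exp (-x / 2) := by
  have hlog2 : (1 / 2 : ℝ) < Real.log 2 := by linarith [Real.log_two_gt_d9]
  have hx : x < ⌊x⌋₊ + 1 := Nat.lt_floor_add_one x
  rw [← Real.exp_log (by norm_num : (0 : ℝ) < 1 / 2), ← Real.exp_nat_mul, Real.exp_le_exp,
    one_div, Real.log_inv]
  push_cast
  nlinarith

section BinomialRandomSubset

variable {α : Type*} (Γ : Finset α) (p : ℝ)

noncomputable def binomialWeight (G : Finset α) : ℝ :=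
  p ^ #G * (1 - p) ^ (#Γ - #G)

noncomputable def binomialProb (A : Finset α → Prop) : ℝ :=
  ∑ G ∈ Γ.powerset, if A G then binomialWeight Γ p G else 0

theorem gnpProb_eq_binomialProb (n : ℕ) (A : Finset (Sym2 (Fin n)) → Prop) :
    gnpProb n p A = binomialProb (edgeUniv n) p A :=
  rfl

variable {Γ p}

theorem binomialWeight_nonneg (hp0 : 0 ≤ p) (hp1 : p ≤ 1) (G : Finset α) :
    0 ≤ binomialWeight Γ p G :=
  mul_nonneg (pow_nonneg hp0 _) (pow_nonneg (sub_nonneg.2 hp1) _)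

variable (Γ p)

theorem sum_binomialWeight : ∑ G ∈ Γ.powerset, binomialWeight Γ p G = 1 := by
  have h := Finset.prod_add (fun _ ↦ p) (fun _ ↦ 1 - p) Γ
  simp only [prod_const, add_sub_cancel, one_pow] at h
  refine (sum_congr rfl fun G hG ↦ ?_).trans h.symm
  rw [binomialWeight, card_sdiff_of_subset (mem_powerset.1 hG)]

theorem sum_binomialWeight_superset [DecidableEq α] {A : Finset α} (hA : A ⊆ Γ) :
    ∑ G ∈ Γ.powerset with A ⊆ G, binomialWeight Γ p G = p ^ #A := by
  calc ∑ G ∈ Γ.powerset with A ⊆ G, binomialWeight Γ p G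
      = ∑ H ∈ (Γ \ A).powerset, p ^ #A * binomialWeight (Γ \ A) p H := by
        refine sum_nbij' (· \ A) (· ∪ A) ?_ ?_ ?_ ?_ ?_
        · intro G hG
          simp only [mem_filter, mem_powerset] at hG ⊢
          exact sdiff_subset_sdiff hG.1 le_rfl
        · intro H hH
          simp only [mem_filter, mem_powerset] at hH ⊢
          exact ⟨union_subset (hH.trans sdiff_subset) hA, subset_union_right⟩
        · intro G hG
          exact sdiff_union_of_subset (mem_filter.1 hG).2
        · intro H hH
          exact union_sdiff_cancel_right
            (disjoint_of_subset_left (mem_powerset.1 hH) sdiff_disjoint)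
        · intro G hG
          obtain ⟨hGΓ, hAG⟩ := mem_filter.1 hG
          have := card_le_card hAG
          have := card_le_card (mem_powerset.1 hGΓ)
          rw [binomialWeight, binomialWeight, card_sdiff_of_subset hAG,
            card_sdiff_of_subset hA, ← mul_assoc, ← pow_add]
          congr 2 <;> omega
    _ = p ^ #A := by rw [← mul_sum, sum_binomialWeight, mul_one]

variable {Γ p}

theorem binomialProb_eq_one_of_forall {A : Finset α → Prop} (hA : ∀ G ⊆ Γ, A G) :
    binomialProb Γ p A = 1 :=
  (sum_congr rfl fun G hG ↦ if_pos (hA G (mem_powerset.1 hG))).trans (sum_binomialWeight Γ p)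

theorem binomialProb_nonneg (hp0 : 0 ≤ p) (hp1 : p ≤ 1) (A : Finset α → Prop) :
    0 ≤ binomialProb Γ p A :=
  sum_nonneg fun G _ ↦ by
    split_ifs
    exacts [binomialWeight_nonneg hp0 hp1 G, le_rfl]

theorem one_sub_sum_le_binomialProb (hp0 : 0 ≤ p) (hp1 : p ≤ 1) {A B : Finset α → Prop}
    (hAB : ∀ G ⊆ Γ, ¬ A G → B G) :
    1 - ∑ G ∈ Γ.powerset with B G, binomialWeight Γ p G ≤ binomialProb Γ p A := by
  rw [← sum_binomialWeight Γ p, sum_filter, ← sum_sub_distrib]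
  refine sum_le_sum fun G hG ↦ ?_
  have := hAB G (mem_powerset.1 hG)
  have := binomialWeight_nonneg (Γ := Γ) hp0 hp1 G
  split_ifs <;> first | linarith | tauto

theorem binomialProb_mono (hp0 : 0 ≤ p) (hp1 : p ≤ 1) {A B : Finset α → Prop}
    (hAB : ∀ G ⊆ Γ, A G → B G) : binomialProb Γ p A ≤ binomialProb Γ p B :=
  sum_le_sum fun G hG ↦ by
    have := hAB G (mem_powerset.1 hG)
    split_ifs <;> first | exact le_rfl | exact binomialWeight_nonneg hp0 hp1 G | tauto

end BinomialRandomSubset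

section DisjointTuples

variable {α ι : Type*} (I : Finset ι) (S : ι → Finset α)

noncomputable def disjointTuples (m : ℕ) : Finset (Fin m → ι) :=
  {t ∈ Fintype.piFinset fun _ ↦ I | Pairwise (Disjoint on fun j ↦ S (t j))}

def tupleUnion [DecidableEq α] {m : ℕ} (t : Fin m → ι) : Finset α :=
  univ.biUnion fun j ↦ S (t j)

variable {I S}

theorem mem_disjointTuples {m : ℕ} {t : Fin m → ι} :
    t ∈ disjointTuples I S m ↔ (∀ j, t j ∈ I) ∧ Pairwise (Disjoint on fun j ↦ S (t j)) := by
  rw [disjointTuples, mem_filter, Fintype.mem_piFinset]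

theorem card_disjointTuples_le (m : ℕ) : #(disjointTuples I S m) ≤ #I ^ m :=
  (card_filter_le _ _).trans (by simp)

variable [DecidableEq α]

theorem card_tupleUnion {s m : ℕ} (hS : ∀ i ∈ I, #(S i) = s) {t : Fin m → ι}
    (ht : t ∈ disjointTuples I S m) : #(tupleUnion S t) = m * s := by
  obtain ⟨htI, hdisj⟩ := mem_disjointTuples.1 ht
  rw [tupleUnion, card_biUnion fun j _ j' _ hjj' ↦ hdisj hjj']
  simp [hS _ (htI _)]

theorem tupleUnion_snoc {m : ℕ} (t : Fin m → ι) (i : ι) :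
    tupleUnion S (Fin.snoc t i : Fin (m + 1) → ι) = tupleUnion S t ∪ S i := by
  ext x
  simp [tupleUnion, Fin.exists_fin_succ', or_comm]

theorem snoc_mem_disjointTuples {m : ℕ} {t : Fin m → ι} {i : ι}
    (ht : t ∈ disjointTuples I S m) (hi : i ∈ I) (hti : Disjoint (tupleUnion S t) (S i)) :
    (Fin.snoc t i : Fin (m + 1) → ι) ∈ disjointTuples I S (m + 1) := by
  obtain ⟨htI, hdisj⟩ := mem_disjointTuples.1 ht
  have hdisj_last (j : Fin m) : Disjoint (S (t j)) (S i) :=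
    hti.mono_left (subset_biUnion_of_mem (fun j ↦ S (t j)) (mem_univ j))
  refine mem_disjointTuples.2 ⟨Fin.lastCases (by simpa) (by simpa), ?_⟩
  intro j j' hjj'
  induction j using Fin.lastCases <;> induction j' using Fin.lastCases <;>
    simp only [onFun, Fin.snoc_last, Fin.snoc_castSucc] at hjj' ⊢
  · exact absurd rfl hjj'
  · exact (hdisj_last _).symm
  · exact hdisj_last _
  · exact hdisj fun h ↦ hjj' (congrArg _ h)

end DisjointTuples

section DeletionMethod

variable {α ι : Type*} [DecidableEq α]

def IsDeletionRobust (I : Finset ι) (S : ι → Finset α) (μ k : ℝ) (G : Finset α) : Prop :=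
  ∀ E ⊆ G, (#E : ℝ) ≤ k → 2 * μ < #{i ∈ I | S i ⊆ G \ E}

variable {Γ : Finset α} {p : ℝ} {I : Finset ι} {S : ι → Finset α} {s : ℕ}

theorem sum_binomialWeight_mul_card_disjointTuples_le (hp0 : 0 ≤ p)
    (hS : ∀ i ∈ I, #(S i) = s) (hSΓ : ∀ i ∈ I, S i ⊆ Γ) (m : ℕ) :
    ∑ G ∈ Γ.powerset,
        binomialWeight Γ p G * #{t ∈ disjointTuples I S m | tupleUnion S t ⊆ G}
      ≤ (#I * p ^ s) ^ m := by
  have hunion (t) (ht : t ∈ disjointTuples I S m) : tupleUnion S t ⊆ Γ :=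
    biUnion_subset.2 fun j _ ↦ hSΓ _ ((mem_disjointTuples.1 ht).1 j)
  calc ∑ G ∈ Γ.powerset,
        binomialWeight Γ p G * #{t ∈ disjointTuples I S m | tupleUnion S t ⊆ G}
      = ∑ t ∈ disjointTuples I S m,
          ∑ G ∈ Γ.powerset with tupleUnion S t ⊆ G, binomialWeight Γ p G := by
        simp_rw [card_filter, Nat.cast_sum, mul_sum, sum_filter]
        rw [sum_comm]
        refine sum_congr rfl fun t _ ↦ sum_congr rfl fun G _ ↦ ?_
        split_ifs <;> simp
    _ = #(disjointTuples I S m) * p ^ (m * s) := by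
        rw [sum_congr rfl fun t ht ↦ by
          rw [sum_binomialWeight_superset Γ p (hunion t ht), card_tupleUnion hS ht],
          sum_const, nsmul_eq_mul]
    _ ≤ (#I * p ^ s) ^ m := by
        rw [mul_pow, ← pow_mul, mul_comm s]
        gcongr
        exact_mod_cast card_disjointTuples_le m

theorem two_mul_card_le_card_disjointTuples_succ {G : Finset α} {μ k : ℝ}
    (hS : ∀ i ∈ I, #(S i) = s) (hG : IsDeletionRobust I S μ k G) {m : ℕ}
    (hm : (m * s : ℝ) ≤ k) :
    2 * μ * #{t ∈ disjointTuples I S m | tupleUnion S t ⊆ G}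
      ≤ #{t ∈ disjointTuples I S (m + 1) | tupleUnion S t ⊆ G} := by
  set T := {t ∈ disjointTuples I S m | tupleUnion S t ⊆ G}
  set ext := fun t : Fin m → ι ↦ {i ∈ I | S i ⊆ G \ tupleUnion S t}
  have hext (t) (ht : t ∈ T) : 2 * μ ≤ #(ext t) := by
    obtain ⟨htD, htG⟩ := mem_filter.1 ht
    refine (hG _ htG ?_).le
    rwa [card_tupleUnion hS htD, Nat.cast_mul]
  have hsnoc : Set.MapsTo (fun q : (_ : Fin m → ι) × ι ↦ (Fin.snoc q.1 q.2 : Fin (m + 1) → ι))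
      (T.sigma ext) ({t ∈ disjointTuples I S (m + 1) | tupleUnion S t ⊆ G} : Finset _) := by
    rintro ⟨t, i⟩ hti
    obtain ⟨ht, hi⟩ := mem_sigma.1 hti
    obtain ⟨hiI, hiG⟩ := mem_filter.1 hi
    refine mem_filter.2 ⟨snoc_mem_disjointTuples (mem_filter.1 ht).1 hiI ?_, ?_⟩
    · exact disjoint_sdiff.mono_right hiG
    · rw [tupleUnion_snoc]
      exact union_subset (mem_filter.1 ht).2 (hiG.trans sdiff_subset)
  calc 2 * μ * #T = ∑ _t ∈ T, 2 * μ := by rw [sum_const, nsmul_eq_mul, mul_comm]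
    _ ≤ ∑ t ∈ T, (#(ext t) : ℝ) := sum_le_sum hext
    _ = #(T.sigma ext) := by rw [card_sigma, Nat.cast_sum]
    _ ≤ _ := by
        refine Nat.cast_le.2 (card_le_card_of_injOn _ hsnoc ?_)
        rintro ⟨t, i⟩ - ⟨t', i'⟩ - h
        obtain ⟨rfl, rfl⟩ := Fin.snoc_injective2 h
        rfl

theorem two_mul_pow_le_card_disjointTuples {G : Finset α} {μ k : ℝ} (hμ : 0 ≤ μ)
    (hS : ∀ i ∈ I, #(S i) = s) (hG : IsDeletionRobust I S μ k G) :
    ∀ m : ℕ, (m * s : ℝ) ≤ k →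
      (2 * μ) ^ (m + 1) ≤ #{t ∈ disjointTuples I S (m + 1) | tupleUnion S t ⊆ G}
  | 0, hk => by
    have hempty : #{t ∈ disjointTuples I S 0 | tupleUnion S t ⊆ G} = 1 := by
      refine card_eq_one.2 ⟨finZeroElim, eq_singleton_iff_unique_mem.2 ⟨?_, ?_⟩⟩
      · simp [mem_disjointTuples, tupleUnion, Pairwise]
      · exact fun _ _ ↦ Subsingleton.elim _ _
    simpa [hempty] using
      two_mul_card_le_card_disjointTuples_succ hS hG (m := 0) (by simpa using hk)
  | m + 1, hk => by
    have hm : (m * s : ℝ) ≤ k := le_trans (by gcongr; linarith) hk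
    calc (2 * μ) ^ (m + 2) = 2 * μ * (2 * μ) ^ (m + 1) := pow_succ' _ _
      _ ≤ 2 * μ * #{t ∈ disjointTuples I S (m + 1) | tupleUnion S t ⊆ G} := by
          gcongr
          exact two_mul_pow_le_card_disjointTuples hμ hS hG m hm
      _ ≤ _ := two_mul_card_le_card_disjointTuples_succ hS hG (by exact_mod_cast hk)

theorem sum_binomialWeight_isDeletionRobust_le (hp0 : 0 ≤ p) (hp1 : p ≤ 1)
    (hS : ∀ i ∈ I, #(S i) = s) (hSΓ : ∀ i ∈ I, S i ⊆ Γ) {μ k : ℝ} (hμ : 0 < μ)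
    (hIμ : #I * p ^ s ≤ μ) {m : ℕ} (hm : (m * s : ℝ) ≤ k) :
    ∑ G ∈ Γ.powerset with IsDeletionRobust I S μ k G,
        binomialWeight Γ p G ≤ (1 / 2) ^ (m + 1) := by
  set R := {G ∈ Γ.powerset | IsDeletionRobust I S μ k G}
  have hmarkov : (∑ G ∈ R, binomialWeight Γ p G) * (2 * μ) ^ (m + 1) ≤ μ ^ (m + 1) :=
    calc (∑ G ∈ R, binomialWeight Γ p G) * (2 * μ) ^ (m + 1)
        ≤ ∑ G ∈ R, binomialWeight Γ p G *
            #{t ∈ disjointTuples I S (m + 1) | tupleUnion S t ⊆ G} := by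
          rw [sum_mul]
          refine sum_le_sum fun G hG ↦ ?_
          gcongr
          · exact binomialWeight_nonneg hp0 hp1 G
          · exact two_mul_pow_le_card_disjointTuples hμ.le hS (mem_filter.1 hG).2 m hm
      _ ≤ ∑ G ∈ Γ.powerset, binomialWeight Γ p G *
            #{t ∈ disjointTuples I S (m + 1) | tupleUnion S t ⊆ G} :=
          sum_le_sum_of_subset_of_nonneg (filter_subset _ _) fun G _ _ ↦
            mul_nonneg (binomialWeight_nonneg hp0 hp1 G) (Nat.cast_nonneg _)
      _ ≤ (#I * p ^ s) ^ (m + 1) := sum_binomialWeight_mul_card_disjointTuples_le hp0 hS hSΓ _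
      _ ≤ μ ^ (m + 1) := by gcongr
  rwa [← le_div_iff₀ (by positivity), mul_pow, div_mul_cancel_right₀ (by positivity),
    ← inv_pow, ← one_div] at hmarkov

theorem le_binomialProb_deletion (hp0 : 0 < p) (hp1 : p ≤ 1)
    (hS : ∀ i ∈ I, #(S i) = s) (hSΓ : ∀ i ∈ I, S i ⊆ Γ) {μ k : ℝ} (hμ : 0 ≤ μ)
    (hIμ : #I * p ^ s ≤ μ) (hk : 0 ≤ k) :
    1 - Real.exp (-k / (2 * s)) ≤
      binomialProb Γ p fun G ↦ ∃ E ⊆ G, (#E : ℝ) ≤ k ∧ (#{i ∈ I | S i ⊆ G \ E} : ℝ) ≤ 2 * μ := by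
  rcases hμ.eq_or_lt with rfl | hμ
  · have hI : I = ∅ :=
      card_eq_zero.1 <| Nat.le_zero.1 <| by
        exact_mod_cast nonpos_of_mul_nonpos_left hIμ (by positivity)
    rw [binomialProb_eq_one_of_forall fun G _ ↦ ⟨∅, by simp [hI, hk]⟩, sub_le_self_iff]
    exact (Real.exp_pos _).le
  have hfloor : (⌊k / s⌋₊ * s : ℝ) ≤ k := by
    rcases (Nat.cast_nonneg s : (0 : ℝ) ≤ s).eq_or_lt with hs | hs
    · simpa [← hs] using hk
    · exact (le_div_iff₀ hs).1 (Nat.floor_le (by positivity))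
  refine le_trans ?_ (one_sub_sum_le_binomialProb hp0.le hp1 (B := IsDeletionRobust I S μ k)
    fun G _ hG ↦ by simpa only [IsDeletionRobust, not_exists, not_and, not_le] using hG)
  gcongr 1 - ?_
  calc ∑ G ∈ Γ.powerset with IsDeletionRobust I S μ k G, binomialWeight Γ p G
      ≤ (1 / 2 : ℝ) ^ (⌊k / s⌋₊ + 1) :=
        sum_binomialWeight_isDeletionRobust_le hp0.le hp1 hS hSΓ hμ hIμ hfloor
    _ ≤ Real.exp (-(k / s) / 2) := half_pow_floor_add_one_le_exp _
    _ = Real.exp (-k / (2 * s)) := by rw [neg_div, neg_div, div_div, mul_comm]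

end DeletionMethod

section Copies

variable {V β : Type*} [Fintype V]

theorem card_filter_apply_mem_apply_mem [Fintype β] [DecidableEq β] {a₁ a₂ : V} (ha : a₁ ≠ a₂)
    (W : Finset β) :
    #{φ : V → β | φ a₁ ∈ W ∧ φ a₂ ∈ W} = Fintype.card β ^ (Fintype.card V - 2) * #W ^ 2 := by
  have hpi : ({φ : V → β | φ a₁ ∈ W ∧ φ a₂ ∈ W} : Finset _) =
      Fintype.piFinset fun v ↦ if v ∈ ({a₁, a₂} : Finset V) then W else univ := by
    ext φ
    simp only [mem_filter, mem_univ, true_and, Fintype.mem_piFinset]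
    constructor
    · rintro ⟨h₁, h₂⟩ v
      split_ifs with hv
      · rcases mem_insert.1 hv with rfl | hv
        exacts [h₁, (mem_singleton.1 hv) ▸ h₂]
      · exact mem_univ _
    · intro h
      exact ⟨by simpa using h a₁, by simpa using h a₂⟩
  have hcompl : #(univ.filter fun v ↦ v ∉ ({a₁, a₂} : Finset V)) = Fintype.card V - 2 := by
    rw [filter_not, filter_mem_eq_inter, univ_inter, card_sdiff_of_subset (subset_univ _),
      card_pair ha, card_univ]
  simp_rw [hpi, Fintype.card_piFinset, apply_ite card, card_univ]
  rw [prod_ite, prod_const, prod_const, hcompl, filter_mem_eq_inter, univ_inter, card_pair ha,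
    mul_comm]

noncomputable def rootedInjections [Fintype β] [DecidableEq β] (a₁ a₂ : V) (W : Finset β) :
    Finset (V → β) :=
  {φ | Injective φ ∧ Set.range φ ∩ W = {φ a₁, φ a₂}}

theorem card_rootedInjections_le [Fintype β] [DecidableEq β] {a₁ a₂ : V} (ha : a₁ ≠ a₂)
    (W : Finset β) :
    #(rootedInjections a₁ a₂ W) ≤ Fintype.card β ^ (Fintype.card V - 2) * #W ^ 2 := by
  refine (card_le_card fun φ hφ ↦ ?_).trans_eq (card_filter_apply_mem_apply_mem ha W)
  have hrange := (mem_filter.1 hφ).2.2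
  have h₁ : φ a₁ ∈ Set.range φ ∩ W := hrange ▸ Set.mem_insert _ _
  have h₂ : φ a₂ ∈ Set.range φ ∩ W := hrange ▸ Set.mem_insert_of_mem _ rfl
  exact mem_filter.2 ⟨mem_univ _, h₁.2, h₂.2⟩

variable (F : SimpleGraph V)

theorem forall_adj_mem_iff_image_edgeFinset_subset [DecidableEq β] (φ : V → β)
    (X : Finset (Sym2 β)) :
    (∀ a b, F.Adj a b → s(φ a, φ b) ∈ X) ↔ F.edgeFinset.image (Sym2.map φ) ⊆ X := by
  simp only [image_subset_iff, SimpleGraph.mem_edgeFinset, Sym2.forall, Sym2.map_mk,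
    SimpleGraph.mem_edgeSet]

theorem ncard_copies_eq_card_filter_rootedInjections [Fintype β] [DecidableEq β] (a₁ a₂ : V)
    (W : Finset β) (X : Finset (Sym2 β)) :
    {φ : V → β | Injective φ ∧ (∀ a b, F.Adj a b → s(φ a, φ b) ∈ X) ∧
        Set.range φ ∩ W = {φ a₁, φ a₂}}.ncard =
      #{φ ∈ rootedInjections a₁ a₂ W | F.edgeFinset.image (Sym2.map φ) ⊆ X} := by
  rw [← Set.ncard_coe_finset]
  congr 1
  ext φ
  simp only [coe_filter, rootedInjections, mem_filter, mem_univ, true_and, Set.mem_ofPred_eq,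
    forall_adj_mem_iff_image_edgeFinset_subset]
  tauto

theorem card_image_edgeFinset [DecidableEq β] {φ : V → β} (hφ : Injective φ) :
    #(F.edgeFinset.image (Sym2.map φ)) = F.edgeSet.ncard := by
  rw [card_image_of_injective _ (Sym2.map.injective hφ), Set.ncard_eq_toFinset_card']
  rfl

theorem image_edgeFinset_subset_edgeUniv {n : ℕ} {φ : V → Fin n} (hφ : Injective φ) :
    F.edgeFinset.image (Sym2.map φ) ⊆ edgeUniv n := by
  simp only [image_subset_iff, SimpleGraph.mem_edgeFinset, Sym2.forall, Sym2.map_mk,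
    SimpleGraph.mem_edgeSet, edgeUniv, mem_filter, mem_univ, true_and, Sym2.mk_isDiag_iff]
  exact fun a b hab h ↦ hab.ne (hφ h)

end Copies

theorem stmt_10_general {VF : Type*} [Fintype VF] (F : SimpleGraph VF)
    (a1 a2 : VF) (ha : a1 ≠ a2)
    (n : ℕ) (W : Finset (Fin n)) (p : ℝ)
    (hp1 : Real.log n / n ≤ p) (hp2 : p < 1) :
    1 - Real.exp (-((n : ℝ) * Real.log n) / (2 * F.edgeSet.ncard)) ≤
      gnpProb n p (fun G =>
        ∃ E0 ⊆ G, (E0.card : ℝ) ≤ n * Real.log n ∧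
          ({φ : VF → Fin n | Function.Injective φ ∧
              (∀ a b, F.Adj a b → s(φ a, φ b) ∈ G \ E0) ∧
              Set.range φ ∩ ↑W = {φ a1, φ a2}}.ncard : ℝ) ≤
            2 * p ^ F.edgeSet.ncard * (n : ℝ) ^ (Fintype.card VF - 2) * (W.card : ℝ) ^ 2) := by
  rw [gnpProb_eq_binomialProb]
  have hp0 : 0 ≤ p := (div_nonneg (Real.log_natCast_nonneg n) n.cast_nonneg).trans hp1
  obtain hn | hn := lt_or_ge n 2
  · have hlog : Real.log n = 0 := by interval_cases n <;> simp
    simpa [hlog] using binomialProb_nonneg hp0 hp2.le _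
  have hp : 0 < p := (div_pos (Real.log_pos (by exact_mod_cast hn)) (by positivity)).trans_le hp1
  have hΦ : (#(rootedInjections a1 a2 W) : ℝ) * p ^ F.edgeSet.ncard ≤
      p ^ F.edgeSet.ncard * (n ^ (Fintype.card VF - 2) * #W ^ 2) := by
    rw [mul_comm]
    gcongr
    exact_mod_cast (card_rootedInjections_le ha W).trans_eq (by rw [Fintype.card_fin])
  refine (le_binomialProb_deletion (S := fun φ ↦ F.edgeFinset.image (Sym2.map φ))
    (k := n * Real.log n) hp hp2.le
    (fun φ hφ ↦ card_image_edgeFinset F (mem_filter.1 hφ).2.1)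
    (fun φ hφ ↦ image_edgeFinset_subset_edgeUniv F (mem_filter.1 hφ).2.1)
    (by positivity) hΦ (by positivity)).trans (binomialProb_mono hp0 hp2.le ?_)
  rintro G - ⟨E, hEG, hEk, hcopies⟩
  refine ⟨E, hEG, hEk, ?_⟩
  rw [ncard_copies_eq_card_filter_rootedInjections]
  linarith

/-- Deletion method: for a fixed graph `F⋆` with distinguished non-adjacent vertices `a₁ ≠ a₂`
and `W ⊆ [n]`, in `G(n,p)` with `(log n)/n ≤ p < 1`, with probability at least
`1 - exp(-(n log n)/(2 e(F⋆)))` one can delete a set `E₀` of at most `n log n` edges so that at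
most `2 p^{e(F⋆)} n^{v(F⋆)-2} |W|²` copies `φ(F⋆)` of `F⋆` with
`V(φ(F⋆)) ∩ W = {φ(a₁), φ(a₂)}` remain. -/
theorem stmt_10 {VF : Type*} [Fintype VF] (F : SimpleGraph VF)
    (a1 a2 : VF) (ha : a1 ≠ a2) (hna : ¬ F.Adj a1 a2)
    (n : ℕ) (W : Finset (Fin n)) (p : ℝ)
    (hp1 : Real.log n / n ≤ p) (hp2 : p < 1) :
    1 - Real.exp (-((n : ℝ) * Real.log n) / (2 * F.edgeSet.ncard)) ≤
      gnpProb n p (fun G =>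
        ∃ E0 ⊆ G, (E0.card : ℝ) ≤ n * Real.log n ∧
          ({φ : VF → Fin n | Function.Injective φ ∧
              (∀ a b, F.Adj a b → s(φ a, φ b) ∈ G \ E0) ∧
              Set.range φ ∩ ↑W = {φ a1, φ a2}}.ncard : ℝ) ≤
            2 * p ^ F.edgeSet.ncard * (n : ℝ) ^ (Fintype.card VF - 2) * (W.card : ℝ) ^ 2) :=
  stmt_10_general F a1 a2 ha n W p hp1 hp2
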